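/- arXiv:math/0312348 — 4 statements merged into one kernel-verified Lean document; each statement's English description precedes it below -/
import Mathlib

section
/- Let H₂ be a group with a normal subgroup H₁, and let R : H₂ → H₁ be a map whose kernel (preimage of the identity) is exactly H₁ and which satisfies R(λ*μ) = R(λ) * λ * R(μ) * I(λ), where I(λ) denotes the inverse of λ in H₂. Define k : H₂ → H₂ by k(λ) := R(λ) * λ. Then k is a group automorphism of H₂ with inverse k⁻¹(λ) = R'(λ) * λ for an appropriate R', k(λ) * I(λ) ∈ H₁ for all λ, and k(λ) = λ if and only if λ ∈ H₁. -/
/-- Let `H₁` be a normal subgroup of `H₂` and `R : H₂ → H₂` a map with values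
in `H₁`, kernel exactly `H₁`, satisfying the twisted homomorphism property
`R(λμ) = R(λ) · (λ R(μ) λ⁻¹)`.  Then `k(λ) := R(λ)·λ` is a group automorphism of `H₂`
with inverse of the form `λ ↦ R'(λ)·λ` with `R'` valued in `H₁`, `k(λ)·λ⁻¹ ∈ H₁`, and
`k(λ) = λ` iff `λ ∈ H₁`. -/
theorem stmt4 {H₂ : Type*} [Group H₂] (H₁ : Subgroup H₂) [H₁.Normal]
    (R : H₂ → H₂)
    (hRmem : ∀ lam, R lam ∈ H₁)
    (hker : ∀ lam, R lam = 1 ↔ lam ∈ H₁)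
    (htw : ∀ lam μ, R (lam * μ) = R lam * (lam * R μ * lam⁻¹)) :
    (∀ lam μ, R (lam * μ) * (lam * μ) = (R lam * lam) * (R μ * μ)) ∧
    Function.Bijective (fun lam => R lam * lam) ∧
    (∃ R' : H₂ → H₂, (∀ lam, R' lam ∈ H₁) ∧
      (∀ lam, R' (R lam * lam) * (R lam * lam) = lam) ∧
      (∀ lam, R (R' lam * lam) * (R' lam * lam) = lam)) ∧
    (∀ lam, (R lam * lam) * lam⁻¹ ∈ H₁) ∧
    (∀ lam, R lam * lam = lam ↔ lam ∈ H₁) := by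
  have hRk : ∀ lam, R (R lam * lam) = R lam := by
    intro lam
    rw [htw, (hker (R lam)).2 (hRmem lam)]
    group
  have hleft : ∀ lam, (R lam)⁻¹ * (R lam * lam) = lam := by intro lam; group
  have hright : ∀ lam, R ((R lam)⁻¹ * lam) * ((R lam)⁻¹ * lam) = lam := by
    intro lam
    have h1 : R ((R lam)⁻¹) = 1 := (hker _).2 (H₁.inv_mem (hRmem lam))
    rw [htw, h1]
    group
  refine ⟨?_, ?_, ?_, ?_, ?_⟩
  · intro lam μ
    rw [htw]; group
  · refine Function.bijective_iff_has_inverse.2 ⟨fun lam => (R lam)⁻¹ * lam, ?_, ?_⟩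
    · intro lam
      simp only [hRk lam]
      group
    · intro lam
      exact hright lam
  · refine ⟨fun lam => (R lam)⁻¹, fun lam => H₁.inv_mem (hRmem lam), ?_, ?_⟩
    · intro lam
      simp only [hRk lam]; group
    · intro lam; exact hright lam
  · intro lam
    simpa using hRmem lam
  · intro lam
    rw [← hker lam]
    constructor
    · intro h; have := mul_right_cancel (a := R lam) (b := lam) (c := 1); simpa using this (by simpa using h)
    · intro h; rw [h, one_mul]
end

section
/- Let α be a unitary operator on a Hilbert space K, let G₁ be a group of unitaries in K such that α acts on G₁ by α(U) = χ(U)·U for scalars χ(U) ∈ U(1), and let K₁ be the closed linear span of G₁. Suppose U is a unit vector with α(U) = λ·U for a unitary λ ∈ G₁ whose eigenvalue R(λ) ∈ U(1) satisfies: R(λ)ⁿ·μ are pairwise distinct elements of the eigenvalue group H₁ for all n ≥ 0 and each μ ∈ H₁ (total ergodicity consequence). If U is not proportional to any element of G₁, then U ∉ K₁, i.e., U cannot be a (possibly infinite) linear combination of eigenvectors of α. -/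
/-!
Comparing the `e (ρ * μ)`-coefficients of `α U = L U` shows that the coefficients
`a μ = ⟪e μ, U⟫` satisfy `‖a (ρ * μ)‖ = ‖a μ‖`, so `‖a‖` is constant along each orbit
`μ, ρ μ, ρ² μ, …`. These orbits are infinite while `‖a‖²` is summable by Bessel's inequality,
so every coefficient vanishes; a vector of the closed span of the `e μ` orthogonal to all of
them is `0`, contradicting `‖U‖ = 1`.
-/

section

variable {𝕜 E F : Type*} [RCLike 𝕜] [NormedAddCommGroup E] [InnerProductSpace 𝕜 E]
  [NormedAddCommGroup F] [InnerProductSpace 𝕜 F]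

theorem LinearIsometry.inner_map_eq_mul_inner_of_map_eq_smul (T : E →ₗᵢ[𝕜] F)
    {v : E} {w : F} {c : 𝕜} (hc : ‖c‖ = 1) (hv : T v = c • w) (x : E) :
    inner 𝕜 w (T x) = c * inner 𝕜 v x := by
  rw [← T.inner_map_map, hv, inner_smul_left, ← mul_assoc, RCLike.mul_conj, hc]
  simp

theorem Submodule.eq_zero_of_mem_closure_span_of_forall_inner_eq_zero {s : Set E} {x : E}
    (hx : x ∈ (span 𝕜 s).topologicalClosure) (h : ∀ v ∈ s, inner 𝕜 v x = 0) :
    x = 0 := by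
  have hperp : x ∈ (span 𝕜 s)ᗮ := by
    rw [mem_orthogonal]
    intro v hv
    induction hv using span_induction with
    | mem v hv => exact h v hv
    | zero => exact inner_zero_left x
    | add u v _ _ hu hv => rw [inner_add_left, hu, hv, add_zero]
    | smul t v _ hv => rw [inner_smul_left, hv, mul_zero]
  have hclosure : (span 𝕜 s).topologicalClosure ≤ (span 𝕜 s)ᗮᗮ :=
    topologicalClosure_minimal _ (le_orthogonal_orthogonal _) (isClosed_orthogonal _)
  exact inner_self_eq_zero.mp (inner_left_of_mem_orthogonal hperp (hclosure hx))

end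

theorem eq_zero_of_summable_of_apply_mul_eq {G : Type*} [Monoid G] {f : G → ℝ}
    (hf : Summable f) {ρ : G} (hρ : ∀ μ, f (ρ * μ) = f μ) {μ : G}
    (horbit : Function.Injective fun n : ℕ ↦ ρ ^ n * μ) : f μ = 0 := by
  have hconst : ∀ n : ℕ, f (ρ ^ n * μ) = f μ := by
    intro n
    induction n with
    | zero => rw [pow_zero, one_mul]
    | succ n ih => rw [pow_succ', mul_assoc, hρ, ih]
  have htendsto := (hf.comp_injective horbit).tendsto_atTop_zero
  simp only [Function.comp_def, hconst] at htendsto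
  exact tendsto_nhds_unique tendsto_const_nhds htendsto

theorem stmt6_general {K : Type*} [NormedAddCommGroup K] [InnerProductSpace ℂ K]
    {H₁ : Type*} [CommGroup H₁]
    (α : K ≃ₗᵢ[ℂ] K) (e : H₁ → K) (he : Orthonormal ℂ e)
    (χ : H₁ → ℂ) (hχ : ∀ μ, ‖χ μ‖ = 1)
    (heig : ∀ μ, α (e μ) = χ μ • e μ)
    (L : K ≃ₗᵢ[ℂ] K) (ρ : H₁) (c : H₁ → ℂ) (hc : ∀ μ, ‖c μ‖ = 1)
    (hL : ∀ μ, L (e μ) = c μ • e (ρ * μ))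
    (hdist : ∀ μ : H₁, Function.Injective fun n : ℕ => ρ ^ n * μ)
    (U : K) (hUnorm : ‖U‖ = 1) (hU : α U = L U) :
    U ∉ (Submodule.span ℂ (Set.range e)).topologicalClosure := by
  intro hmem
  set a : H₁ → ℂ := fun μ ↦ inner ℂ (e μ) U
  have hshift : ∀ μ, ‖a (ρ * μ)‖ ^ 2 = ‖a μ‖ ^ 2 := by
    intro μ
    have hcoef : χ (ρ * μ) * a (ρ * μ) = c μ * a μ := by
      rw [← α.toLinearIsometry.inner_map_eq_mul_inner_of_map_eq_smul (hχ _) (heig _),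
        ← L.toLinearIsometry.inner_map_eq_mul_inner_of_map_eq_smul (hc μ) (hL μ)]
      exact congrArg (inner ℂ (e (ρ * μ))) hU
    simpa only [norm_mul, hχ, hc, one_mul] using congrArg (‖·‖ ^ 2) hcoef
  have hzero : ∀ μ, a μ = 0 := fun μ ↦ by
    simpa using eq_zero_of_summable_of_apply_mul_eq (he.inner_products_summable U) hshift (hdist μ)
  have hU0 : U = 0 := Submodule.eq_zero_of_mem_closure_span_of_forall_inner_eq_zero hmem <| by
    rintro _ ⟨μ, rfl⟩
    exact hzero μ
  simp [hU0] at hUnorm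

/-- Let `α` be a unitary on a Hilbert space `K`, `e : H₁ → K` an orthonormal
family of eigenvectors (`α (e μ) = χ μ • e μ`, `‖χ μ‖ = 1`) spanning the closed subspace
`K₁`.  Let `U` be a unit vector with `α U = L U`, where `L` is a unitary (multiplication
by the eigen-unitary `λ ∈ G₁`) acting on the basis by `L (e μ) = c μ • e (ρ * μ)`
(`‖c μ‖ = 1`) with eigenvalue `ρ`, intertwining `α` by `α ∘ L = χ ρ • (L ∘ α)`, and
suppose the elements `ρ ^ n * μ` are pairwise distinct for `n ≥ 0` (total ergodicity).
If `U` is not proportional to any eigenvector, then `U` does not lie in `K₁`. -/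
theorem stmt6 {K : Type*} [NormedAddCommGroup K] [InnerProductSpace ℂ K] [CompleteSpace K]
    {H₁ : Type*} [CommGroup H₁]
    (α : K ≃ₗᵢ[ℂ] K) (e : H₁ → K) (he : Orthonormal ℂ e)
    (χ : H₁ → ℂ) (hχ : ∀ μ, ‖χ μ‖ = 1)
    (heig : ∀ μ, α (e μ) = χ μ • e μ)
    (L : K ≃ₗᵢ[ℂ] K) (ρ : H₁) (c : H₁ → ℂ) (hc : ∀ μ, ‖c μ‖ = 1)
    (hL : ∀ μ, L (e μ) = c μ • e (ρ * μ))
    (hint : ∀ x : K, α (L x) = χ ρ • L (α x))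
    (hdist : ∀ μ : H₁, Function.Injective fun n : ℕ => ρ ^ n * μ)
    (U : K) (hUnorm : ‖U‖ = 1) (hU : α U = L U)
    (hnp : ∀ (b : ℂ) (μ : H₁), U ≠ b • e μ) :
    U ∉ (Submodule.span ℂ (Set.range e)).topologicalClosure :=
  stmt6_general α e he χ hχ heig L ρ c hc hL hdist U hUnorm hU
end

section
/- Let ω be an irrational real number and let α be the map on ℓ²(ℤ²) induced by the quantum torus automorphism, acting on the orthonormal basis {e_{n,m}} (corresponding to monomials UⁿVᵐ) by α(e_{n,m}) = e^{2πi(nω + h·m(m-1)/2)} e_{n+m, m}. Then for every positive integer N, the only vectors fixed by α^N are scalar multiples of e_{0,0}; i.e., the system is totally ergodic. -/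
/-!
The Koopman operator is a weighted permutation of the basis along the shear
`σ (n, m) = (n + m, m)`, with unimodular weights, so `α^N` preserves the modulus of the
coefficients along `σ^N`. For `m ≠ 0` the `σ^N`-orbit of `(n, m)` is infinite, and a
square-summable family constant in modulus along an infinite orbit vanishes there. On the line
`m = 0` the shear is trivial and `α` acts diagonally by `e^{2πinω}`, which for `n ≠ 0` has no
nonzero `N`-th power equal to `1` since `ω` is irrational.
-/

open Complex Function

theorem Memℓp.eq_zero_of_norm_eq_of_injective {ι : Type*} {E : ι → Type*}
    [∀ i, NormedAddCommGroup (E i)] {p : ENNReal} (hp : 0 < p.toReal) {f : ∀ i, E i}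
    (hf : Memℓp f p) {u : ℕ → ι} (hu : Injective u) (hconst : ∀ k, ‖f (u k)‖ = ‖f (u 0)‖) :
    f (u 0) = 0 := by
  have hlim : Filter.Tendsto (fun k => ‖f (u k)‖ ^ p.toReal) Filter.atTop (nhds 0) := by
    rw [← Nat.cofinite_eq_atTop]
    exact (hf.summable hp).tendsto_cofinite_zero.comp hu.tendsto_cofinite
  simp only [hconst] at hlim
  have := tendsto_nhds_unique tendsto_const_nhds hlim
  rw [Real.rpow_eq_zero (norm_nonneg _) hp.ne'] at this
  exact norm_eq_zero.mp this

theorem lp.eq_apply_smul_single_one {ι 𝕜 : Type*} [NormedRing 𝕜] [DecidableEq ι]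
    {p : ENNReal} {f : lp (fun _ : ι => 𝕜) p} {i : ι} (hf : ∀ j, j ≠ i → f j = 0) :
    f = f i • lp.single p i 1 := by
  ext j
  by_cases hj : j = i
  · subst hj
    simp
  · simp [hf j hj, hj]

theorem Irrational.cexp_two_pi_I_mul_ne_one {x : ℝ} (hx : Irrational x) :
    cexp (2 * Real.pi * I * x) ≠ 1 := by
  rw [Ne, exp_eq_one_iff]
  rintro ⟨k, hk⟩
  have h2πI : 2 * (Real.pi : ℂ) * I ≠ 0 := by simp [Real.pi_ne_zero]
  have : (x : ℂ) = k := mul_left_cancel₀ h2πI (by rw [hk]; ring)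
  exact hx.ne_int k (mod_cast this)

section WeightedPermutation

variable {𝕜 ι : Type*} [RCLike 𝕜] [DecidableEq ι]
  {U : lp (fun _ : ι => 𝕜) 2 ≃ₗᵢ[𝕜] lp (fun _ : ι => 𝕜) 2}

namespace LinearIsometryEquiv

theorem norm_eq_one_of_map_lp_single {i j : ι} {c : 𝕜}
    (hU : U (lp.single 2 i 1) = c • lp.single 2 j 1) : ‖c‖ = 1 := by
  simpa [hU, norm_smul, lp.norm_single] using U.norm_map (lp.single 2 i 1)

theorem lp_apply_of_map_single {i j : ι} {c : 𝕜}
    (hU : U (lp.single 2 i 1) = c • lp.single 2 j 1) (g : lp (fun _ : ι => 𝕜) 2) :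
    U g j = c * g i := by
  have hinner := U.inner_map_map (lp.single 2 i 1) g
  rw [hU, inner_smul_left, lp.inner_single_left, lp.inner_single_left] at hinner
  simp only [RCLike.inner_apply, map_one, mul_one] at hinner
  calc U g j = (c * (starRingEnd 𝕜) c) * U g j := by
        rw [RCLike.mul_conj, norm_eq_one_of_map_lp_single hU]; simp
    _ = c * g i := by rw [mul_assoc, hinner]

theorem iterate_lp_apply_of_map_single_self {i : ι} {c : 𝕜}
    (hU : U (lp.single 2 i 1) = c • lp.single 2 i 1) (k : ℕ) (g : lp (fun _ : ι => 𝕜) 2) :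
    (U^[k] g) i = c ^ k * g i := by
  induction k with
  | zero => simp
  | succ k ih => rw [iterate_succ_apply', lp_apply_of_map_single hU, ih, pow_succ', mul_assoc]

theorem lp_apply_eq_zero_of_iterate_fixed_of_pow_ne_one {i : ι} {c : 𝕜}
    (hU : U (lp.single 2 i 1) = c • lp.single 2 i 1) {N : ℕ} (hc : c ^ N ≠ 1)
    {f : lp (fun _ : ι => 𝕜) 2} (hf : U^[N] f = f) : f i = 0 := by
  have hfi := iterate_lp_apply_of_map_single_self hU N f
  rw [hf] at hfi
  by_contra hne
  exact hc ((mul_eq_right₀ hne).mp hfi.symm)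

variable {σ : ι → ι} {c : ι → 𝕜}

theorem norm_iterate_lp_apply_iterate (hU : ∀ i, U (lp.single 2 i 1) = c i • lp.single 2 (σ i) 1)
    (k : ℕ) (g : lp (fun _ : ι => 𝕜) 2) (i : ι) : ‖(U^[k] g) (σ^[k] i)‖ = ‖g i‖ := by
  induction k generalizing i with
  | zero => rfl
  | succ k ih =>
    rw [iterate_succ_apply', iterate_succ_apply', lp_apply_of_map_single (hU _), norm_mul,
      norm_eq_one_of_map_lp_single (hU _), one_mul, ih]

theorem lp_apply_eq_zero_of_iterate_fixed
    (hU : ∀ i, U (lp.single 2 i 1) = c i • lp.single 2 (σ i) 1) {N : ℕ}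
    {f : lp (fun _ : ι => 𝕜) 2} (hf : U^[N] f = f) {i : ι}
    (hinf : Injective fun k => σ^[N * k] i) : f i = 0 := by
  have hfix : ∀ k, U^[N * k] f = f := fun k => by
    rw [iterate_mul]; exact IsFixedPt.iterate hf k
  refine (lp.memℓp f).eq_zero_of_norm_eq_of_injective (by norm_num) hinf fun k => ?_
  simpa [hfix k] using norm_iterate_lp_apply_iterate hU (N * k) f i

end LinearIsometryEquiv

end WeightedPermutation

def shear (p : ℤ × ℤ) : ℤ × ℤ := (p.1 + p.2, p.2)

theorem shear_iterate (k : ℕ) (n m : ℤ) : shear^[k] (n, m) = (n + k * m, m) := by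
  induction k with
  | zero => simp
  | succ k ih =>
    rw [iterate_succ_apply', ih]
    simp only [shear, Prod.mk.injEq, and_true]
    push_cast
    ring

theorem shear_iterate_mul_injective {N : ℕ} (hN : N ≠ 0) (n : ℤ) {m : ℤ} (hm : m ≠ 0) :
    Injective fun k => shear^[N * k] (n, m) := by
  intro a b hab
  simp only [shear_iterate, Prod.mk.injEq, and_true, add_right_inj] at hab
  have hNm : (N : ℤ) * m ≠ 0 := mul_ne_zero (mod_cast hN) hm
  have : (a : ℤ) = b := mul_right_cancel₀ hNm (by push_cast at hab; linarith)
  exact_mod_cast this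

/-- Let `ω` be irrational and `α` the Koopman unitary of the quantum torus
automorphism on `ℓ²(ℤ²)`, acting on the canonical basis by
`α e_{n,m} = e^{2πi(nω + h m(m-1)/2)} e_{n+m,m}`.  Then for every positive integer `N`,
the only vectors fixed by `α^N` are scalar multiples of `e_{0,0}` (total ergodicity). -/
theorem stmt15 (h ω : ℝ) (hω : Irrational ω)
    (α : lp (fun _ : ℤ × ℤ => ℂ) 2 ≃ₗᵢ[ℂ] lp (fun _ : ℤ × ℤ => ℂ) 2)
    (hα : ∀ n m : ℤ,
      α (lp.single 2 ((n, m) : ℤ × ℤ) 1)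
        = Complex.exp (2 * Real.pi * Complex.I * (n * ω + h * m * (m - 1) / 2))
            • lp.single 2 ((n + m, m) : ℤ × ℤ) 1) :
    ∀ N : ℕ, 0 < N → ∀ f : lp (fun _ : ℤ × ℤ => ℂ) 2,
      (⇑α)^[N] f = f → ∃ c : ℂ, f = c • lp.single 2 ((0, 0) : ℤ × ℤ) 1 := by
  intro N hN f hf
  refine ⟨f (0, 0), lp.eq_apply_smul_single_one fun ⟨n, m⟩ hnm => ?_⟩
  by_cases hm : m = 0
  · subst hm
    have hn : n ≠ 0 := by simpa using hnm
    have hdiag : α (lp.single 2 (n, 0) 1)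
        = cexp (2 * Real.pi * I * (n * ω)) • lp.single 2 (n, 0) 1 := by
      simpa using hα n 0
    have hpow : cexp (2 * Real.pi * I * (n * ω)) ^ N ≠ 1 := by
      rw [← exp_nat_mul]
      convert ((hω.intCast_mul hn).natCast_mul hN.ne').cexp_two_pi_I_mul_ne_one using 2
      push_cast
      ring
    exact α.lp_apply_eq_zero_of_iterate_fixed_of_pow_ne_one hdiag hpow hf
  · exact α.lp_apply_eq_zero_of_iterate_fixed (σ := shear)
      (c := fun p => cexp (2 * Real.pi * I * (p.1 * ω + h * p.2 * (p.2 - 1) / 2)))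
      (fun ⟨n, m⟩ => hα n m) hf
      (shear_iterate_mul_injective hN.ne' n hm)
end

section
/- Let α be a unitary on a Hilbert space K with distinguished unit vector 1 such that the eigenvectors {U_μ} of α (orthonormal, indexed by eigenvalues μ in a group H₁ ⊆ U(1)) span a closed subspace K₁, and suppose multiplication by any eigen-unitary preserves both K₁ and its orthogonal complement K₂. If U is a unit vector with α(U) = λU (λ an eigen-unitary), and the orthogonal decomposition U = U₁ + U₂ with U₁ ∈ K₁, U₂ ∈ K₂ has U₂ ≠ 0 and both components satisfy α(Uᵢ) = λUᵢ, then (by uniqueness of quasi-eigenvectors up to phase) U₁ = 0; i.e., U ∈ K₂ and hence U ⊥ every eigenvector of α. -/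
theorem stmt17_general {K : Type*} [NormedAddCommGroup K] [InnerProductSpace ℂ K]
    (α L : K ≃ₗᵢ[ℂ] K)
    (K₁ : Submodule ℂ K)
    (huniq : ∀ x y : K, α x = L x → α y = L y → x ≠ 0 → ∃ c : ℂ, y = c • x)
    (U U₁ U₂ : K)
    (hdec : U = U₁ + U₂) (hm₁ : U₁ ∈ K₁) (hm₂ : U₂ ∈ K₁ᗮ) (hU₂ : U₂ ≠ 0)
    (hα₁ : α U₁ = L U₁) (hα₂ : α U₂ = L U₂) :
    U₁ = 0 ∧ U ∈ K₁ᗮ ∧ ∀ v ∈ K₁, (inner ℂ v U : ℂ) = 0 := by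
  obtain ⟨c, hc⟩ := huniq U₂ U₁ hα₂ hα₁ hU₂
  have hU₁ : U₁ = 0 :=
    Submodule.disjoint_def.mp K₁.orthogonal_disjoint U₁ hm₁ (hc ▸ K₁ᗮ.smul_mem c hm₂)
  have hU : U ∈ K₁ᗮ := by rwa [hdec, hU₁, zero_add]
  exact ⟨hU₁, hU, fun v hv => Submodule.inner_right_of_mem_orthogonal hv hU⟩

/-- Let `α` be a unitary on a Hilbert space `K`, `K₁` the closed span of the
eigen-unitaries, `L` (multiplication by an eigen-unitary `λ`) preserving `K₁` and `K₁ᗮ`.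
Suppose quasi-eigenvectors of quasi-eigenvalue `λ` are unique up to a scalar.  If the unit
vector `U` satisfies `α U = L U` and its orthogonal decomposition `U = U₁ + U₂` (with
`U₁ ∈ K₁`, `U₂ ∈ K₁ᗮ`, `U₂ ≠ 0`) has `α U₁ = L U₁` and `α U₂ = L U₂`, then `U₁ = 0`;
hence `U ∈ K₁ᗮ` and `U` is orthogonal to every eigenvector of `α` (every vector of `K₁`). -/
theorem stmt17 {K : Type*} [NormedAddCommGroup K] [InnerProductSpace ℂ K] [CompleteSpace K]
    (α L : K ≃ₗᵢ[ℂ] K) (one : K) (hone : ‖one‖ = 1)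
    (herg : ∀ x : K, α x = x → ∃ c : ℂ, x = c • one)
    (K₁ : Submodule ℂ K)
    (hLK₁ : ∀ x ∈ K₁, L x ∈ K₁) (hLK₂ : ∀ x ∈ K₁ᗮ, L x ∈ K₁ᗮ)
    (huniq : ∀ x y : K, α x = L x → α y = L y → x ≠ 0 → ∃ c : ℂ, y = c • x)
    (U U₁ U₂ : K) (hUnorm : ‖U‖ = 1)
    (hdec : U = U₁ + U₂) (hm₁ : U₁ ∈ K₁) (hm₂ : U₂ ∈ K₁ᗮ) (hU₂ : U₂ ≠ 0)
    (hαU : α U = L U) (hα₁ : α U₁ = L U₁) (hα₂ : α U₂ = L U₂) :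
    U₁ = 0 ∧ U ∈ K₁ᗮ ∧ ∀ v ∈ K₁, (inner ℂ v U : ℂ) = 0 :=
  stmt17_general α L K₁ huniq U U₁ U₂ hdec hm₁ hm₂ hU₂ hα₁ hα₂
end
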